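/- Let F ∈ K = ℚ(x,y). If F is fixed by the swap automorphism σ (i.e. F(x,y) = F(y,x)) and by the inversion automorphism τ (i.e. F(x,y) = F(x⁻¹,y⁻¹)), then F belongs to the subfield of K generated over ℚ by the two elements t_• = x/(1+2x+2y+x·y) and t_∘ = y/(1+2x+2y+x·y). (This is the key implication of the rationality criterion, Lemma 4.2 of the paper.) -/

import Mathlib

noncomputable section

/-- The field `ℚ(x,y)` of rational functions in two variables. -/
abbrev RatFuncTwo : Type := FractionRing (MvPolynomial (Fin 2) ℚ)

/-- The element `x` of `ℚ(x,y)`. -/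
def xK : RatFuncTwo := algebraMap (MvPolynomial (Fin 2) ℚ) RatFuncTwo (MvPolynomial.X 0)

/-- The element `y` of `ℚ(x,y)`. -/
def yK : RatFuncTwo := algebraMap (MvPolynomial (Fin 2) ℚ) RatFuncTwo (MvPolynomial.X 1)

/-- `t_• = x/(1+2x+2y+xy)`. -/
def tBul : RatFuncTwo := xK / (1 + 2 * xK + 2 * yK + xK * yK)

/-- `t_∘ = y/(1+2x+2y+xy)`. -/
def tCir : RatFuncTwo := yK / (1 + 2 * xK + 2 * yK + xK * yK)

/-! Write `D = 1 + 2x + 2y + xy` and `L = ℚ(t_•, t_∘)`. Since `x = t_• D` and `y = t_∘ D`, the field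
`ℚ(x,y)` is `L(D)`, and `D` is a root of a quadratic over `L`, so `ℚ(x,y) = L + L·D`. The composite
`u = τ ∘ σ`, mapping `x ↦ y⁻¹` and `y ↦ x⁻¹`, fixes `t_•` and `t_∘`, hence fixes `L` pointwise, and
sends `D` to the other root `D/(xy)` of that quadratic. An element `p + qD` fixed by `σ` and `τ` is
fixed by `u`, and since `D/(xy) ≠ D` this forces `q = 0`. -/

section QuadraticRoot

variable {K : Type*} [Field K] {D δ γ : K}

-- The product of `p + qD` with its conjugate `p + q(δ - D)` is `p² + pqδ + q²γ`, free of `D`.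
theorem inv_add_mul_eq_of_sq_eq (hD : D ^ 2 = δ * D - γ) {p q : K} (hc : p + q * (δ - D) ≠ 0) :
    (p + q * D)⁻¹ = (p + q * δ) * (p ^ 2 + p * q * δ + q ^ 2 * γ)⁻¹
      + -(q * (p ^ 2 + p * q * δ + q ^ 2 * γ)⁻¹) * D := by
  have hN : p ^ 2 + p * q * δ + q ^ 2 * γ = (p + q * D) * (p + q * (δ - D)) := by
    linear_combination q ^ 2 * hD
  rw [hN]
  by_cases ha : p + q * D = 0
  · simp [ha]
  · field_simp
    ring

namespace Subfield

variable (L : Subfield K)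

def adjoinQuadraticRoot (hδ : δ ∈ L) (hγ : γ ∈ L) (hD : D ^ 2 = δ * D - γ) : Subfield K where
  carrier := {a | ∃ p ∈ L, ∃ q ∈ L, a = p + q * D}
  zero_mem' := ⟨0, zero_mem L, 0, zero_mem L, by ring⟩
  one_mem' := ⟨1, one_mem L, 0, zero_mem L, by ring⟩
  add_mem' := by
    rintro _ _ ⟨p, hp, q, hq, rfl⟩ ⟨p', hp', q', hq', rfl⟩
    exact ⟨p + p', add_mem hp hp', q + q', add_mem hq hq', by ring⟩
  neg_mem' := by
    rintro _ ⟨p, hp, q, hq, rfl⟩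
    exact ⟨-p, neg_mem hp, -q, neg_mem hq, by ring⟩
  mul_mem' := by
    rintro _ _ ⟨p, hp, q, hq, rfl⟩ ⟨p', hp', q', hq', rfl⟩
    refine ⟨p * p' - q * q' * γ, sub_mem (mul_mem hp hp') (mul_mem (mul_mem hq hq') hγ),
      p * q' + q * p' + q * q' * δ,
      add_mem (add_mem (mul_mem hp hq') (mul_mem hq hp')) (mul_mem (mul_mem hq hq') hδ), ?_⟩
    linear_combination q * q' * hD
  inv_mem' := by
    rintro _ ⟨p, hp, q, hq, rfl⟩
    by_cases hc : p + q * (δ - D) = 0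
    · have ha : p + q * D = 2 * p + q * δ := by linear_combination -hc
      have haL : 2 * p + q * δ ∈ L := add_mem (mul_mem (ofNat_mem L 2) hp) (mul_mem hq hδ)
      exact ⟨(2 * p + q * δ)⁻¹, inv_mem haL, 0, zero_mem L, by rw [ha]; ring⟩
    · have hN : (p ^ 2 + p * q * δ + q ^ 2 * γ)⁻¹ ∈ L := inv_mem <|
        add_mem (add_mem (pow_mem hp 2) (mul_mem (mul_mem hp hq) hδ)) (mul_mem (pow_mem hq 2) hγ)
      exact ⟨_, mul_mem (add_mem hp (mul_mem hq hδ)) hN, _, neg_mem (mul_mem hq hN),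
        inv_add_mul_eq_of_sq_eq hD hc⟩

theorem mem_adjoinQuadraticRoot {hδ : δ ∈ L} {hγ : γ ∈ L} {hD : D ^ 2 = δ * D - γ} {a : K} :
    a ∈ adjoinQuadraticRoot L hδ hγ hD ↔ ∃ p ∈ L, ∃ q ∈ L, a = p + q * D :=
  Iff.rfl

end Subfield

end QuadraticRoot

theorem RingEquiv.eq_zero_of_map_add_mul_eq_self {R : Type*} [CommRing R] [IsDomain R]
    (u : R ≃+* R) {D δ p q : R}
    (hp : u p = p) (hq : u q = q) (huD : u D = δ - D) (hD : 2 * D ≠ δ)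
    (hfix : u (p + q * D) = p + q * D) : q = 0 := by
  rw [map_add, map_mul, hp, hq, huD] at hfix
  have h : q * (2 * D - δ) = 0 := by linear_combination -hfix
  exact (mul_eq_zero.mp h).resolve_right (sub_ne_zero.mpr hD)

theorem MvPolynomial.eq_top_of_algebraMap_X_mem {ι : Type*}
    {S : Subfield (FractionRing (MvPolynomial ι ℚ))}
    (hS : ∀ i, algebraMap (MvPolynomial ι ℚ) _ (X i) ∈ S) : S = ⊤ := by
  refine top_unique ?_
  rw [← IsFractionRing.closure_range_algebraMap (MvPolynomial ι ℚ), Subfield.closure_le]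
  rintro _ ⟨P, rfl⟩
  induction P using MvPolynomial.induction_on with
  | C c =>
    rw [← RingHom.comp_apply, eq_ratCast]
    exact SubfieldClass.ratCast_mem S c
  | add f g hf hg => rw [map_add]; exact add_mem hf hg
  | mul_X f i hf => rw [map_mul]; exact mul_mem hf (hS i)

theorem MvPolynomial.algebraMap_ne_zero_of_eval_ne_zero {ι R : Type*} [CommRing R] [IsDomain R]
    {P : MvPolynomial ι R} {v : ι → R} (hP : eval v P ≠ 0) :
    algebraMap (MvPolynomial ι R) (FractionRing (MvPolynomial ι R)) P ≠ 0 := by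
  rw [Ne, IsFractionRing.to_map_eq_zero_iff]
  rintro rfl
  exact hP (map_zero _)

def denK : RatFuncTwo := 1 + 2 * xK + 2 * yK + xK * yK

theorem xK_ne_zero : xK ≠ 0 :=
  MvPolynomial.algebraMap_ne_zero_of_eval_ne_zero (v := 1) (by simp)

theorem yK_ne_zero : yK ≠ 0 :=
  MvPolynomial.algebraMap_ne_zero_of_eval_ne_zero (v := 1) (by simp)

theorem denK_ne_zero : denK ≠ 0 := by
  have := MvPolynomial.algebraMap_ne_zero_of_eval_ne_zero (v := (0 : Fin 2 → ℚ))
    (P := 1 + 2 * .X 0 + 2 * .X 1 + .X 0 * .X 1) (by simp)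
  simpa [denK, xK, yK, map_ofNat] using this

theorem xK_mul_yK_sub_one_ne_zero : xK * yK - 1 ≠ 0 := by
  have := MvPolynomial.algebraMap_ne_zero_of_eval_ne_zero (v := (0 : Fin 2 → ℚ))
    (P := .X 0 * .X 1 - 1) (by simp)
  simpa [xK, yK] using this

theorem tBul_mul_denK : tBul * denK = xK :=
  div_mul_cancel₀ xK denK_ne_zero

theorem tCir_mul_denK : tCir * denK = yK :=
  div_mul_cancel₀ yK denK_ne_zero

/-- `denK` is a root of `X² - denTrace X + denNorm` over `ℚ(t_•, t_∘)`, where in terms of `x, y`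
`denTrace = (1 + xy) D/(xy)` and `denNorm = D²/(xy)`. -/
def denTrace : RatFuncTwo := (1 - 2 * tBul - 2 * tCir) / (tBul * tCir)

def denNorm : RatFuncTwo := (tBul * tCir)⁻¹

theorem denTrace_eq : denTrace = (1 + xK * yK) * denK / (xK * yK) := by
  have := xK_ne_zero; have := yK_ne_zero; have := denK_ne_zero
  rw [denTrace, tBul, tCir, ← denK]
  field_simp
  rw [denK]
  ring

theorem denK_sq : denK ^ 2 = denTrace * denK - denNorm := by
  have := xK_ne_zero; have := yK_ne_zero; have := denK_ne_zero
  rw [denTrace_eq, denNorm, tBul, tCir, ← denK]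
  field_simp
  ring

theorem two_mul_denK_ne_denTrace : 2 * denK ≠ denTrace := by
  have := xK_ne_zero; have := yK_ne_zero
  have h : 2 * denK - denTrace = denK * (xK * yK - 1) / (xK * yK) := by
    rw [denTrace_eq]
    field_simp
    ring
  rw [Ne, ← sub_eq_zero, h]
  exact div_ne_zero (mul_ne_zero denK_ne_zero xK_mul_yK_sub_one_ne_zero) (mul_ne_zero ‹_› ‹_›)

theorem tBul_mem_closure : tBul ∈ Subfield.closure {tBul, tCir} :=
  Subfield.subset_closure (by simp)

theorem tCir_mem_closure : tCir ∈ Subfield.closure {tBul, tCir} :=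
  Subfield.subset_closure (by simp)

theorem denTrace_mem_closure : denTrace ∈ Subfield.closure {tBul, tCir} :=
  div_mem (sub_mem (sub_mem (one_mem _) (mul_mem (ofNat_mem _ 2) tBul_mem_closure))
    (mul_mem (ofNat_mem _ 2) tCir_mem_closure)) (mul_mem tBul_mem_closure tCir_mem_closure)

theorem denNorm_mem_closure : denNorm ∈ Subfield.closure {tBul, tCir} :=
  inv_mem (mul_mem tBul_mem_closure tCir_mem_closure)

theorem exists_eq_add_mul_denK (a : RatFuncTwo) :
    ∃ p ∈ Subfield.closure {tBul, tCir}, ∃ q ∈ Subfield.closure {tBul, tCir}, a = p + q * denK := by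
  set S := (Subfield.closure {tBul, tCir}).adjoinQuadraticRoot denTrace_mem_closure
    denNorm_mem_closure denK_sq
  have hxS : xK ∈ S :=
    ⟨0, zero_mem _, tBul, tBul_mem_closure, by rw [zero_add, tBul_mul_denK]⟩
  have hyS : yK ∈ S :=
    ⟨0, zero_mem _, tCir, tCir_mem_closure, by rw [zero_add, tCir_mul_denK]⟩
  have hS : S = ⊤ := MvPolynomial.eq_top_of_algebraMap_X_mem (Fin.forall_fin_two.mpr ⟨hxS, hyS⟩)
  exact (Subfield.mem_adjoinQuadraticRoot _).mp (hS ▸ Subfield.mem_top a)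

section InvSwap

variable {u : RatFuncTwo ≃+* RatFuncTwo} (hux : u xK = yK⁻¹) (huy : u yK = xK⁻¹)
include hux huy

theorem map_denK_of_invSwap : u denK = denK / (xK * yK) := by
  have := xK_ne_zero; have := yK_ne_zero
  simp only [denK, map_add, map_mul, map_one, map_ofNat, hux, huy]
  field_simp
  ring

theorem map_denK_eq_denTrace_sub_of_invSwap : u denK = denTrace - denK := by
  have := xK_ne_zero; have := yK_ne_zero
  rw [map_denK_of_invSwap hux huy, denTrace_eq]
  field_simp
  ring

theorem map_eq_self_of_mem_closure_of_invSwap {a : RatFuncTwo}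
    (ha : a ∈ Subfield.closure {tBul, tCir}) : u a = a := by
  have := xK_ne_zero; have := yK_ne_zero
  refine RingHom.eqOn_field_closure (f := (u : RatFuncTwo →+* RatFuncTwo)) (g := RingHom.id _)
    ?_ ha
  rintro _ (rfl | rfl)
  · change u (xK / denK) = xK / denK
    rw [map_div₀, hux, map_denK_of_invSwap hux huy]
    field_simp
  · change u (yK / denK) = yK / denK
    rw [map_div₀, huy, map_denK_of_invSwap hux huy]
    field_simp

end InvSwap

/-- If `F ∈ ℚ(x,y)` is fixed by the swap automorphism `σ` (determined by `x ↦ y`, `y ↦ x`)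
and by the inversion automorphism `τ` (determined by `x ↦ x⁻¹`, `y ↦ y⁻¹`), then `F` lies
in the subfield generated (over `ℚ`) by `t_•` and `t_∘`. -/
theorem rationality_criterion
    (σ τ : RatFuncTwo ≃+* RatFuncTwo)
    (hσx : σ xK = yK) (hσy : σ yK = xK)
    (hτx : τ xK = xK⁻¹) (hτy : τ yK = yK⁻¹)
    (F : RatFuncTwo) (hσF : σ F = F) (hτF : τ F = F) :
    F ∈ Subfield.closure {tBul, tCir} := by
  set u := σ.trans τ
  have hux : u xK = yK⁻¹ := by simp [u, hσx, hτy]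
  have huy : u yK = xK⁻¹ := by simp [u, hσy, hτx]
  have huF : u F = F := by simp [u, hσF, hτF]
  obtain ⟨p, hp, q, hq, rfl⟩ := exists_eq_add_mul_denK F
  have hq0 : q = 0 := u.eq_zero_of_map_add_mul_eq_self
    (map_eq_self_of_mem_closure_of_invSwap hux huy hp)
    (map_eq_self_of_mem_closure_of_invSwap hux huy hq)
    (map_denK_eq_denTrace_sub_of_invSwap hux huy) two_mul_denK_ne_denTrace huF
  simpa [hq0] using hp
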